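/- For all nonnegative integers m, positive integers k, and x, E_m^{(k)}(x) = Σ_{n=0}^{m} Ch_n^{(k)}(x) S_2(m,n), where S_2 denotes Stirling numbers of the second kind. -/

import Mathlib

/-!
Substituting `t = e^u - 1` into the Changhee generating function `(2/(2+t))^k (1+t)^x` turns
`2 + t` into `e^u + 1` and the binomial series `(1+t)^x` into `e^{xu}`, so it yields the Euler
generating function; the coefficient of `u^m` of `(e^u - 1)^n` is `n! S₂(m,n)/m!`, which gives the
identity. For natural `x` the binomial series is `(1+t)^x` and `(1 + (e^u - 1))^x = e^{xu}`; each
coefficient of `∑ₙ binom(x,n) (e^u - 1)^n` is a polynomial in `x`, so the case of rational `x`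
follows.
-/

open PowerSeries Finset

/-- Higher-order Changhee numbers of the first kind. -/
noncomputable def Ch (k n : ℕ) : ℚ := (-1/2)^n * n.factorial * ((n+k-1).choose n)

/-- Signed Stirling numbers of the first kind, via coefficients of the falling factorial. -/
noncomputable def stirling1 (n l : ℕ) : ℚ :=
  (∏ i ∈ Finset.range n, (Polynomial.X - (i : Polynomial ℚ))).coeff l

/-- Stirling numbers of the second kind, via (e^t-1)^n = n! Σ S₂(m,n) t^m/m!. -/
noncomputable def stirling2 (m n : ℕ) : ℚ :=
  (m.factorial : ℚ) / n.factorial * PowerSeries.coeff (R := ℚ) m ((PowerSeries.exp ℚ - 1)^n)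

/-- Higher-order Euler numbers, from (2/(e^t+1))^k. -/
noncomputable def EulerN (k l : ℕ) : ℚ :=
  l.factorial * PowerSeries.coeff (R := ℚ) l ((2 * (PowerSeries.exp ℚ + 1)⁻¹)^k)

/-- Higher-order Euler polynomials, from (2/(e^t+1))^k e^{xt}. -/
noncomputable def EulerP (k : ℕ) (x : ℚ) (l : ℕ) : ℚ :=
  l.factorial * PowerSeries.coeff (R := ℚ) l
    ((2 * (PowerSeries.exp ℚ + 1)⁻¹)^k * PowerSeries.rescale x (PowerSeries.exp ℚ))

/-- Generalized binomial coefficient. -/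
noncomputable def gbinom (x : ℚ) (m : ℕ) : ℚ := (∏ i ∈ Finset.range m, (x - i)) / m.factorial

/-- Binomial series (1+t)^x. -/
noncomputable def onePlusXPow (x : ℚ) : PowerSeries ℚ := PowerSeries.mk fun m => gbinom x m

/-- Higher-order Changhee polynomials of the first kind, from (2/(2+t))^k (1+t)^x. -/
noncomputable def ChP (k : ℕ) (x : ℚ) (n : ℕ) : ℚ :=
  n.factorial * PowerSeries.coeff (R := ℚ) n
    ((2 * (2 + PowerSeries.X : PowerSeries ℚ)⁻¹)^k * onePlusXPow x)

/-- Higher-order Changhee numbers of the second kind, from (2/(2+t))^k (1+t)^k. -/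
noncomputable def ChhN (k n : ℕ) : ℚ :=
  n.factorial * PowerSeries.coeff (R := ℚ) n
    ((2 * (2 + PowerSeries.X : PowerSeries ℚ)⁻¹)^k * (1 + PowerSeries.X)^k)

/-- Higher-order Changhee polynomials of the second kind, from (2/(2+t))^k (1+t)^{x+k}. -/
noncomputable def ChP2 (k : ℕ) (x : ℚ) (n : ℕ) : ℚ :=
  n.factorial * PowerSeries.coeff (R := ℚ) n
    ((2 * (2 + PowerSeries.X : PowerSeries ℚ)⁻¹)^k * onePlusXPow (x + k))

namespace PowerSeries

theorem coeff_pow_eq_zero_of_lt {R : Type*} [CommRing R] {a : R⟦X⟧} (ha : constantCoeff a = 0)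
    {m n : ℕ} (h : m < n) : coeff m (a ^ n) = 0 :=
  coeff_of_lt_order _ <|
    (Nat.cast_lt.mpr h).trans_le (le_order_pow_of_constantCoeff_eq_zero n ha)

theorem coeff_subst_eq_sum_range {R : Type*} [CommRing R] {a : R⟦X⟧} (ha : constantCoeff a = 0)
    (f : R⟦X⟧) (m : ℕ) :
    coeff m (f.subst a) = ∑ n ∈ range (m + 1), coeff n f * coeff m (a ^ n) := by
  simp only [coeff_subst' (HasSubst.of_constantCoeff_zero' ha), smul_eq_mul]
  refine finsum_eq_sum_of_support_subset _ fun n hn => ?_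
  by_contra hnm
  simp only [coe_range, Set.mem_Iio, not_lt] at hnm
  exact hn (by simp only [coeff_pow_eq_zero_of_lt ha hnm, mul_zero])

theorem subst_inv {K : Type*} [Field K] {a : K⟦X⟧} (ha : HasSubst a) {f : K⟦X⟧}
    (hf : constantCoeff f ≠ 0) : f⁻¹.subst a = (f.subst a)⁻¹ := by
  have hmul : f.subst a * f⁻¹.subst a = 1 := by
    rw [← subst_mul ha, PowerSeries.mul_inv_cancel f hf, ← coe_substAlgHom ha, map_one]
  have hc : constantCoeff (f.subst a) ≠ 0 := right_ne_zero_of_mul_eq_one (by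
    rw [← map_mul, mul_comm, hmul, map_one])
  rw [PowerSeries.eq_inv_iff_mul_eq_one hc, mul_comm, hmul]

theorem constantCoeff_exp_sub_one (A : Type*) [CommRing A] [Algebra ℚ A] :
    constantCoeff (exp A - 1) = 0 := by
  simp [constantCoeff_exp]

end PowerSeries

theorem gbinom_eq_descPochhammer_eval (x : ℚ) (n : ℕ) :
    gbinom x n = (descPochhammer ℚ n).eval x / n.factorial := by
  rw [gbinom, descPochhammer_eval_eq_prod_range]

theorem gbinom_natCast (N n : ℕ) : gbinom N n = N.choose n := by
  rw [gbinom_eq_descPochhammer_eval, descPochhammer_eval_eq_descFactorial,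
    Nat.descFactorial_eq_factorial_mul_choose]
  push_cast
  field_simp

theorem onePlusXPow_natCast (N : ℕ) : onePlusXPow N = (1 + X) ^ N := by
  ext n
  rw [onePlusXPow, coeff_mk, gbinom_natCast, ← binomialSeries_nat (R := ℚ),
    binomialSeries_coeff, Ring.choose_natCast, smul_eq_mul, mul_one]

theorem subst_exp_sub_one_onePlusXPow_natCast (N : ℕ) :
    (onePlusXPow N).subst (exp ℚ - 1) = rescale (N : ℚ) (exp ℚ) := by
  rw [onePlusXPow_natCast, ← coe_substAlgHom HasSubst.exp_sub_one, map_pow, map_add, map_one,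
    coe_substAlgHom, subst_X HasSubst.exp_sub_one, add_sub_cancel, exp_pow_eq_rescale_exp]

theorem subst_exp_sub_one_onePlusXPow (x : ℚ) :
    (onePlusXPow x).subst (exp ℚ - 1) = rescale x (exp ℚ) := by
  ext m
  set P : Polynomial ℚ := ∑ n ∈ range (m + 1),
    Polynomial.C (coeff m ((exp ℚ - 1 : ℚ⟦X⟧) ^ n) / n.factorial) * descPochhammer ℚ n
  have hP (y : ℚ) : coeff m ((onePlusXPow y).subst (exp ℚ - 1)) = P.eval y := by
    simp only [P, coeff_subst_eq_sum_range (constantCoeff_exp_sub_one ℚ), onePlusXPow, coeff_mk,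
      gbinom_eq_descPochhammer_eval, Polynomial.eval_finsetSum, Polynomial.eval_mul,
      Polynomial.eval_C]
    exact sum_congr rfl fun n _ => by ring
  set Q : Polynomial ℚ := Polynomial.monomial m (1 / m.factorial : ℚ)
  have hQ (y : ℚ) : coeff m (rescale y (exp ℚ)) = Q.eval y := by
    rw [coeff_rescale, coeff_exp, Polynomial.eval_monomial, Algebra.algebraMap_self,
      RingHom.id_apply, mul_comm]
  have hPQ : P = Q :=
    Polynomial.eq_of_infinite_eval_eq _ _ <| Set.infinite_of_injective_forall_mem Nat.cast_injective
      fun N => by rw [Set.mem_ofPred_eq, ← hP, ← hQ, subst_exp_sub_one_onePlusXPow_natCast]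
  rw [hP, hQ, hPQ]

theorem subst_exp_sub_one_two_add_X : (2 + X : ℚ⟦X⟧).subst (exp ℚ - 1) = exp ℚ + 1 := by
  rw [← coe_substAlgHom HasSubst.exp_sub_one, map_add, map_ofNat, coe_substAlgHom,
    subst_X HasSubst.exp_sub_one]
  ring

theorem subst_exp_sub_one_changhee_series (k : ℕ) (x : ℚ) :
    ((2 * (2 + X : ℚ⟦X⟧)⁻¹) ^ k * onePlusXPow x).subst (exp ℚ - 1)
      = (2 * (exp ℚ + 1)⁻¹) ^ k * rescale x (exp ℚ) := by
  have h2X : constantCoeff (2 + X : ℚ⟦X⟧) ≠ 0 := by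
    rw [map_add, map_ofNat, constantCoeff_X]; norm_num
  rw [← coe_substAlgHom HasSubst.exp_sub_one, map_mul, map_pow, map_mul, map_ofNat,
    coe_substAlgHom, subst_inv HasSubst.exp_sub_one h2X, subst_exp_sub_one_two_add_X,
    subst_exp_sub_one_onePlusXPow]

theorem euler_poly_eq_changhee_poly_stirling2_general (m : ℕ) (k : ℕ) (x : ℚ) :
    EulerP k x m = ∑ n ∈ Finset.range (m+1), ChP k x n * stirling2 m n := by
  simp only [EulerP, ChP, stirling2, ← subst_exp_sub_one_changhee_series,
    coeff_subst_eq_sum_range (constantCoeff_exp_sub_one ℚ), mul_sum]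
  refine sum_congr rfl fun n _ => ?_
  field_simp

theorem euler_poly_eq_changhee_poly_stirling2 (m : ℕ) (k : ℕ) (hk : 0 < k) (x : ℚ) :
    EulerP k x m = ∑ n ∈ Finset.range (m+1), ChP k x n * stirling2 m n :=
  euler_poly_eq_changhee_poly_stirling2_general m k x
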